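/- Let (g_n) be a sequence in SL(2,ℝ) with ‖g_n‖ → ∞. Then there exists a subsequence (g_{n_p}) such that for every β ∈ L²(λ) which is not λ-a.e. zero, the L²(λ)-norm ‖T′(g_{n_p})β‖ tends to ∞ as p → ∞. -/

import Mathlib

open MeasureTheory Matrix

noncomputable section

/-- `SL(2,ℝ)`, the group of real 2×2 matrices of determinant 1. -/
abbrev SL2 := Matrix.SpecialLinearGroup (Fin 2) ℝ

/-- The Cauchy probability measure on `ℝ`, with density `ρ ↦ 1/(π(1+ρ²))` with
respect to Lebesgue measure. -/
def cauchyM : Measure ℝ :=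
  volume.withDensity fun ρ => ENNReal.ofReal (1 / (Real.pi * (1 + ρ ^ 2)))

/-- The Möbius right action `ρ·g = (aρ+c)/(bρ+d)` of `g = [[a,b],[c,d]] ∈ SL(2,ℝ)`
on `ℝ` (here `a = g 0 0`, `b = g 0 1`, `c = g 1 0`, `d = g 1 1`). -/
def mob (g : SL2) (ρ : ℝ) : ℝ :=
  (g.1 0 0 * ρ + g.1 1 0) / (g.1 0 1 * ρ + g.1 1 1)

/-- The factor `κ_g(ρ) = ((aρ+c)² + (bρ+d)²)/(ρ²+1)`. -/
def kappa (g : SL2) (ρ : ℝ) : ℝ :=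
  ((g.1 0 0 * ρ + g.1 1 0) ^ 2 + (g.1 0 1 * ρ + g.1 1 1) ^ 2) / (ρ ^ 2 + 1)


/-- The norm `‖g‖ = (a² + b² + c² + d²)^{1/2}` on `SL(2,ℝ)`. -/
def gnorm (g : SL2) : ℝ :=
  Real.sqrt ((g.1 0 0) ^ 2 + (g.1 0 1) ^ 2 + (g.1 1 0) ^ 2 + (g.1 1 1) ^ 2)

/-! Under the substitution `σ = ρ·g` the Cauchy measure transforms by
`dλ(σ) = κ_g(ρ)⁻¹ dλ(ρ)`, and `κ_{g⁻¹}(ρ·g) = κ_g(ρ)⁻¹`; hence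
`‖T′(g)β‖² = ∫ κ_{g⁻¹}(σ)³ β(σ)² dλ(σ)`.
Normalising `g_n⁻¹` by `‖g_n‖` and extracting a convergent subsequence with nonzero limit `m`,
`κ_{g_{n_p}⁻¹}(σ) ~ ‖g_{n_p}‖² κ_m(σ) → ∞` for all `σ` outside a single point,
and Fatou's lemma sends the integrals to `∞` as soon as `β` is not a.e. zero. -/

open Filter Topology
open scoped ENNReal

namespace SL2

variable (h : SL2)

lemma det_eq : h.1 0 0 * h.1 1 1 - h.1 0 1 * h.1 1 0 = 1 := by
  have := h.2
  rwa [Matrix.det_fin_two] at this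

@[simp] lemma inv_apply_zero_zero : (h⁻¹).1 0 0 = h.1 1 1 := by
  simp [SpecialLinearGroup.SL2_inv_expl]

@[simp] lemma inv_apply_zero_one : (h⁻¹).1 0 1 = -h.1 0 1 := by
  simp [SpecialLinearGroup.SL2_inv_expl]

@[simp] lemma inv_apply_one_zero : (h⁻¹).1 1 0 = -h.1 1 0 := by
  simp [SpecialLinearGroup.SL2_inv_expl]

@[simp] lemma inv_apply_one_one : (h⁻¹).1 1 1 = h.1 0 0 := by
  simp [SpecialLinearGroup.SL2_inv_expl]

lemma col_one_ne_zero : h.1 0 1 ≠ 0 ∨ h.1 1 1 ≠ 0 := by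
  by_contra! h0
  simpa [h0.1, h0.2] using det_eq h

end SL2

lemma gnorm_sq (h : SL2) : gnorm h ^ 2 = ∑ i, ∑ j, h.1 i j ^ 2 := by
  rw [gnorm, Real.sq_sqrt (by positivity)]
  simp only [Fin.sum_univ_two]
  ring

lemma gnorm_pos (h : SL2) : 0 < gnorm h :=
  Real.sqrt_pos.2 <| by
    nlinarith [SL2.det_eq h, sq_nonneg (h.1 0 0 - h.1 1 1), sq_nonneg (h.1 0 1 + h.1 1 0)]

lemma gnorm_inv (h : SL2) : gnorm h⁻¹ = gnorm h := by
  simp only [gnorm, SL2.inv_apply_zero_zero, SL2.inv_apply_zero_one, SL2.inv_apply_one_zero,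
    SL2.inv_apply_one_one, neg_sq]
  ring_nf

lemma kappa_pos (h : SL2) (ρ : ℝ) : 0 < kappa h ρ := by
  have hdet : h.1 0 0 * (h.1 0 1 * ρ + h.1 1 1) - h.1 0 1 * (h.1 0 0 * ρ + h.1 1 0) = 1 := by
    linear_combination SL2.det_eq h
  have hnum : 0 < (h.1 0 0 * ρ + h.1 1 0) ^ 2 + (h.1 0 1 * ρ + h.1 1 1) ^ 2 := by
    refine lt_of_le_of_ne (by positivity) fun h0 => ?_
    obtain ⟨h1, h2⟩ := (add_eq_zero_iff_of_nonneg (sq_nonneg _) (sq_nonneg _)).1 h0.symm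
    simp [pow_eq_zero_iff two_ne_zero |>.1 h1, pow_eq_zero_iff two_ne_zero |>.1 h2] at hdet
  unfold kappa
  positivity

section Mobius

variable {h : SL2} {ρ : ℝ} (hρ : h.1 0 1 * ρ + h.1 1 1 ≠ 0)
include hρ

lemma mob_sq_add_one :
    mob h ρ ^ 2 + 1 = kappa h ρ * (ρ ^ 2 + 1) / (h.1 0 1 * ρ + h.1 1 1) ^ 2 := by
  have hρ' : ρ * h.1 0 1 + h.1 1 1 ≠ 0 := by rwa [mul_comm]
  rw [mob, kappa]
  field_simp

lemma inv_num_mob : (h⁻¹).1 0 0 * mob h ρ + (h⁻¹).1 1 0 = ρ / (h.1 0 1 * ρ + h.1 1 1) := by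
  have hρ' : ρ * h.1 0 1 + h.1 1 1 ≠ 0 := by rwa [mul_comm]
  simp only [mob, SL2.inv_apply_zero_zero, SL2.inv_apply_one_zero]
  field_simp
  linear_combination ρ * SL2.det_eq h

lemma inv_den_mob : (h⁻¹).1 0 1 * mob h ρ + (h⁻¹).1 1 1 = 1 / (h.1 0 1 * ρ + h.1 1 1) := by
  have hρ' : ρ * h.1 0 1 + h.1 1 1 ≠ 0 := by rwa [mul_comm]
  simp only [mob, SL2.inv_apply_zero_one, SL2.inv_apply_one_one]
  field_simp
  linear_combination SL2.det_eq h

lemma mob_inv_mob : mob h⁻¹ (mob h ρ) = ρ := by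
  rw [mob, inv_num_mob hρ, inv_den_mob hρ, div_div_div_cancel_right₀ hρ, div_one]

lemma kappa_inv_mob : kappa h⁻¹ (mob h ρ) = (kappa h ρ)⁻¹ := by
  have := (kappa_pos h ρ).ne'
  rw [kappa, inv_num_mob hρ, inv_den_mob hρ, mob_sq_add_one hρ, div_pow, div_pow, ← add_div,
    div_div_div_cancel_right₀ (pow_ne_zero 2 hρ), one_pow]
  field_simp

lemma jacobian_mul_cauchy_density_mob :
    ((h.1 0 1 * ρ + h.1 1 1) ^ 2)⁻¹ * (1 / (Real.pi * (1 + mob h ρ ^ 2)))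
      = (kappa h ρ)⁻¹ * (1 / (Real.pi * (1 + ρ ^ 2))) := by
  have := (kappa_pos h ρ).ne'
  rw [add_comm 1 (mob h ρ ^ 2), mob_sq_add_one hρ]
  field_simp
  ring

lemma hasDerivAt_mob : HasDerivAt (mob h) ((h.1 0 1 * ρ + h.1 1 1) ^ 2)⁻¹ ρ := by
  have := ((hasDerivAt_id' ρ |>.const_mul (h.1 0 0)).add_const (h.1 1 0)).div
    ((hasDerivAt_id' ρ |>.const_mul (h.1 0 1)).add_const (h.1 1 1)) hρ
  refine this.congr_deriv ?_
  rw [inv_eq_one_div]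
  congr 1
  linear_combination SL2.det_eq h

end Mobius

lemma ae_mul_add_ne_zero {a b : ℝ} (hab : a ≠ 0 ∨ b ≠ 0) : ∀ᵐ x : ℝ, a * x + b ≠ 0 := by
  have hsub : {x : ℝ | a * x + b = 0}.Subsingleton := by
    intro x (hx : a * x + b = 0) y (hy : a * y + b = 0)
    by_cases ha : a = 0
    · simp_all
    · exact mul_left_cancel₀ ha (by linear_combination hx - hy)
  simpa only [ae_iff, not_not] using hsub.measure_zero volume

lemma cauchyM_absolutelyContinuous : cauchyM ≪ volume :=
  withDensity_absolutelyContinuous _ _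

lemma lintegral_cauchyM_eq_lintegral_comp_mob (h : SL2) (F : ℝ → ℝ≥0∞) :
    ∫⁻ σ, F σ ∂cauchyM = ∫⁻ ρ, ENNReal.ofReal (kappa h ρ)⁻¹ * F (mob h ρ) ∂cauchyM := by
  set s := {ρ : ℝ | h.1 0 1 * ρ + h.1 1 1 ≠ 0}
  have hs : MeasurableSet s := by measurability
  have hs_ae : ∀ᵐ ρ, ρ ∈ s := ae_mul_add_ne_zero (SL2.col_one_ne_zero h)
  have himage : ∀ᵐ σ, σ ∈ mob h '' s := by
    filter_upwards [ae_mul_add_ne_zero (SL2.col_one_ne_zero h⁻¹)] with σ hσ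
    have hden := inv_den_mob hσ
    have hinv := mob_inv_mob hσ
    rw [inv_inv] at hden hinv
    exact ⟨mob h⁻¹ σ, by simpa [s, hden] using hσ, hinv⟩
  set D : ℝ → ℝ≥0∞ := fun t => ENNReal.ofReal (1 / (Real.pi * (1 + t ^ 2)))
  have hD : Measurable D := by fun_prop
  have hD_fin : ∀ᵐ t, D t < ⊤ := ae_of_all _ fun _ => ENNReal.ofReal_lt_top
  calc ∫⁻ σ, F σ ∂cauchyM = ∫⁻ σ, D σ * F σ :=
        lintegral_withDensity_eq_lintegral_mul_non_measurable _ hD hD_fin F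
    _ = ∫⁻ σ in mob h '' s, D σ * F σ := by rw [Measure.restrict_eq_self_of_ae_mem himage]
    _ = ∫⁻ ρ in s,
          ENNReal.ofReal |((h.1 0 1 * ρ + h.1 1 1) ^ 2)⁻¹| * (D (mob h ρ) * F (mob h ρ)) :=
        lintegral_image_eq_lintegral_abs_deriv_mul hs
          (fun ρ hρ => (hasDerivAt_mob hρ).hasDerivWithinAt)
          (Set.LeftInvOn.injOn fun ρ hρ => mob_inv_mob hρ) _
    _ = ∫⁻ ρ in s, D ρ * (ENNReal.ofReal (kappa h ρ)⁻¹ * F (mob h ρ)) := by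
        refine setLIntegral_congr_fun hs fun ρ hρ => ?_
        simp only [D]
        rw [abs_of_nonneg (by positivity), ← mul_assoc, ← ENNReal.ofReal_mul (by positivity),
          jacobian_mul_cauchy_density_mob hρ, ENNReal.ofReal_mul (inv_nonneg.2 (kappa_pos h _).le)]
        ring
    _ = ∫⁻ ρ, D ρ * (ENNReal.ofReal (kappa h ρ)⁻¹ * F (mob h ρ)) := by
        rw [Measure.restrict_eq_self_of_ae_mem hs_ae]
    _ = ∫⁻ ρ, ENNReal.ofReal (kappa h ρ)⁻¹ * F (mob h ρ) ∂cauchyM :=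
        (lintegral_withDensity_eq_lintegral_mul_non_measurable _ hD hD_fin _).symm

lemma lintegral_dual_action_sq_eq (h : SL2) (β : ℝ → ℝ) :
    ∫⁻ ρ, ENNReal.ofReal (((kappa h ρ ^ 2)⁻¹ * β (mob h ρ)) ^ 2) ∂cauchyM
      = ∫⁻ σ, ENNReal.ofReal (kappa h⁻¹ σ ^ 3 * β σ ^ 2) ∂cauchyM := by
  rw [lintegral_cauchyM_eq_lintegral_comp_mob h
    fun σ => ENNReal.ofReal (kappa h⁻¹ σ ^ 3 * β σ ^ 2)]
  refine lintegral_congr_ae ?_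
  filter_upwards [cauchyM_absolutelyContinuous.ae_le (ae_mul_add_ne_zero (SL2.col_one_ne_zero h))]
    with ρ hρ
  rw [← ENNReal.ofReal_mul (inv_nonneg.2 (kappa_pos h _).le), kappa_inv_mob hρ]
  congr 1
  ring

lemma measurable_kappa (h : SL2) : Measurable (kappa h) := by
  unfold kappa
  fun_prop

def kappaForm (m : Fin 2 → Fin 2 → ℝ) (σ : ℝ) : ℝ :=
  ((m 0 0 * σ + m 1 0) ^ 2 + (m 0 1 * σ + m 1 1) ^ 2) / (σ ^ 2 + 1)

lemma kappa_eq_kappaForm (h : SL2) : kappa h = kappaForm h.1 := rfl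

lemma kappaForm_const_mul (c : ℝ) (m : Fin 2 → Fin 2 → ℝ) (σ : ℝ) :
    kappaForm (fun i j => c * m i j) σ = c ^ 2 * kappaForm m σ := by
  unfold kappaForm
  ring

lemma continuous_kappaForm_left (σ : ℝ) :
    Continuous fun m : Fin 2 → Fin 2 → ℝ => kappaForm m σ := by
  unfold kappaForm
  fun_prop

lemma ae_kappaForm_pos {m : Fin 2 → Fin 2 → ℝ} (hm : m ≠ 0) :
    ∀ᵐ σ : ℝ, 0 < kappaForm m σ := by
  have hcols : (m 0 0 ≠ 0 ∨ m 1 0 ≠ 0) ∨ (m 0 1 ≠ 0 ∨ m 1 1 ≠ 0) := by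
    contrapose! hm
    ext i j
    fin_cases i <;> fin_cases j <;> simp [hm]
  unfold kappaForm
  rcases hcols with hcol | hcol <;>
  · filter_upwards [ae_mul_add_ne_zero hcol] with σ hσ
    positivity

lemma isCompact_setOf_sum_sq_eq_one {ι κ : Type*} [Fintype ι] [Fintype κ] :
    IsCompact {m : ι → κ → ℝ | ∑ i, ∑ j, m i j ^ 2 = 1} := by
  refine (isCompact_univ_pi fun i => isCompact_univ_pi fun j => isCompact_Icc (a := -1) (b := 1))
    |>.of_isClosed_subset (isClosed_eq (by fun_prop) continuous_const) fun m (hm : _ = _) => ?_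
  simp only [Set.mem_univ_pi, Set.mem_Icc, ← abs_le]
  intro i j
  rw [← sq_le_one_iff_abs_le_one]
  calc m i j ^ 2 ≤ ∑ j, m i j ^ 2 :=
        Finset.single_le_sum (fun j _ => sq_nonneg (m i j)) (Finset.mem_univ j)
    _ ≤ ∑ i, ∑ j, m i j ^ 2 :=
        Finset.single_le_sum (fun i _ => Finset.sum_nonneg fun j _ => sq_nonneg (m i j))
          (Finset.mem_univ i)
    _ = 1 := hm

lemma exists_subseq_ae_tendsto_kappa (h : ℕ → SL2)
    (hh : Tendsto (fun n => gnorm (h n)) atTop atTop) :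
    ∃ φ : ℕ → ℕ, StrictMono φ ∧ ∀ᵐ σ : ℝ, Tendsto (fun p => kappa (h (φ p)) σ) atTop atTop := by
  set v : ℕ → Fin 2 → Fin 2 → ℝ := fun n i j => (gnorm (h n))⁻¹ * (h n).1 i j
  have hv : ∀ n, v n ∈ {m : Fin 2 → Fin 2 → ℝ | ∑ i, ∑ j, m i j ^ 2 = 1} := fun n => by
    have := (gnorm_pos (h n)).ne'
    show ∑ i, ∑ j, v n i j ^ 2 = 1
    simp only [v, mul_pow, ← Finset.mul_sum, ← gnorm_sq]
    field_simp
  obtain ⟨M, hM, φ, hφ, hvM⟩ := isCompact_setOf_sum_sq_eq_one.tendsto_subseq hv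
  have hM0 : M ≠ 0 := by
    rintro rfl
    simp at hM
  refine ⟨φ, hφ, ?_⟩
  filter_upwards [ae_kappaForm_pos hM0] with σ hσ
  have hkappa : ∀ n, kappa (h n) σ = gnorm (h n) ^ 2 * kappaForm (v n) σ := fun n => by
    dsimp only [v]
    rw [kappaForm_const_mul _ (h n).1, kappa_eq_kappaForm, ← mul_assoc, inv_pow,
      mul_inv_cancel₀ (pow_pos (gnorm_pos _) 2).ne', one_mul]
  simp_rw [hkappa]
  exact ((tendsto_pow_atTop two_ne_zero).comp (hh.comp hφ.tendsto_atTop)).atTop_mul_pos hσ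
    (((continuous_kappaForm_left σ).tendsto M).comp hvM)

lemma tendsto_lintegral_top_of_measure_ne_zero {α : Type*} [MeasurableSpace α] {μ : Measure α}
    {F : ℕ → α → ℝ≥0∞} (hF : ∀ p, Measurable (F p))
    (hF_top : μ {x | Tendsto (fun p => F p x) atTop (𝓝 ⊤)} ≠ 0) :
    Tendsto (fun p => ∫⁻ x, F p x ∂μ) atTop (𝓝 ⊤) := by
  have hliminf : ∫⁻ x, liminf (fun p => F p x) atTop ∂μ = ⊤ :=
    lintegral_eq_top_of_measure_eq_top_ne_zero (Measurable.liminf hF).aemeasurable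
      (ne_bot_of_le_ne_bot hF_top (measure_mono fun x hx => hx.liminf_eq))
  exact tendsto_of_le_liminf_of_limsup_le (hliminf ▸ lintegral_liminf_le hF) le_top

lemma tendsto_lintegral_ofReal_mul_sq {α : Type*} [MeasurableSpace α] {μ : Measure α}
    {k : ℕ → α → ℝ} (hk : ∀ p, Measurable (k p))
    (hk_top : ∀ᵐ x ∂μ, Tendsto (fun p => k p x) atTop atTop)
    {f : α → ℝ} (hf : AEMeasurable f μ) (hf0 : ¬ f =ᵐ[μ] 0) :
    Tendsto (fun p => ∫⁻ x, ENNReal.ofReal (k p x * f x ^ 2) ∂μ) atTop (𝓝 ⊤) := by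
  have hf_mk : ∀ p, ∫⁻ x, ENNReal.ofReal (k p x * f x ^ 2) ∂μ
      = ∫⁻ x, ENNReal.ofReal (k p x * hf.mk f x ^ 2) ∂μ := fun p =>
    lintegral_congr_ae (hf.ae_eq_mk.mono fun x hx => by simp only [hx])
  simp_rw [hf_mk]
  refine tendsto_lintegral_top_of_measure_ne_zero
    (fun p => ((hk p).mul (hf.measurable_mk.pow_const 2)).ennreal_ofReal) ?_
  have hmk0 : μ {x | hf.mk f x ≠ 0} ≠ 0 := fun h0 =>
    hf0 (hf.ae_eq_mk.trans (ae_iff.2 (by simpa using h0)))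
  refine ne_bot_of_le_ne_bot hmk0 (measure_mono_ae ?_)
  filter_upwards [hk_top] with x hx (hx0 : hf.mk f x ≠ 0)
  exact ENNReal.tendsto_ofReal_atTop.comp (hx.atTop_mul_const (by positivity))

lemma eLpNorm_two_eq_lintegral_ofReal_sq {α : Type*} [MeasurableSpace α] (μ : Measure α)
    (f : α → ℝ) : eLpNorm f 2 μ = (∫⁻ x, ENNReal.ofReal (f x ^ 2) ∂μ) ^ (1 / 2 : ℝ) := by
  rw [eLpNorm_eq_lintegral_rpow_enorm_toReal two_ne_zero ENNReal.ofNat_ne_top]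
  simp only [ENNReal.toReal_ofNat, one_div]
  congr 2
  funext x
  rw [ENNReal.rpow_two, ← enorm_pow, Real.enorm_of_nonneg (sq_nonneg _)]

/-- If `‖g_n‖ → ∞` in `SL(2,ℝ)`, then there is a subsequence `(g_{n_p})` such that for
every `β ∈ L²(λ)` which is not λ-a.e. zero, the `L²(λ)`-norm of
`T′(g_{n_p})β : ρ ↦ κ_{g_{n_p}}(ρ)⁻² β(ρ·g_{n_p})` tends to `∞` as `p → ∞`. -/
theorem dual_action_norm_tendsto_infty
    (g : ℕ → SL2) (hg : Filter.Tendsto (fun n => gnorm (g n)) Filter.atTop Filter.atTop) :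
    ∃ φ : ℕ → ℕ, StrictMono φ ∧
      ∀ β : ℝ → ℝ, MemLp β 2 cauchyM → ¬ (β =ᵐ[cauchyM] fun _ => (0 : ℝ)) →
        Filter.Tendsto
          (fun p => eLpNorm (fun ρ => (kappa (g (φ p)) ρ ^ 2)⁻¹ * β (mob (g (φ p)) ρ)) 2 cauchyM)
          Filter.atTop (nhds ⊤) := by
  obtain ⟨φ, hφ, hκ⟩ :=
    exists_subseq_ae_tendsto_kappa (fun n => (g n)⁻¹) (by simpa only [gnorm_inv] using hg)
  refine ⟨φ, hφ, fun β hβ hβ0 => ?_⟩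
  simp_rw [eLpNorm_two_eq_lintegral_ofReal_sq, lintegral_dual_action_sq_eq]
  refine (ENNReal.tendsto_rpow_at_top (by norm_num)).comp
    (tendsto_lintegral_ofReal_mul_sq (fun p => (measurable_kappa _).pow_const 3) ?_
      hβ.aestronglyMeasurable.aemeasurable hβ0)
  filter_upwards [cauchyM_absolutelyContinuous.ae_le hκ] with σ hσ
  exact (tendsto_pow_atTop three_ne_zero).comp hσ
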